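/- arXiv:2007.05327 — 5 statements merged into one kernel-verified Lean document; each statement's English description precedes it below -/
import Mathlib

section
/- Let I₀ = ∫₀^∞ e^{-s} log s ds. Then for all t > 0, 0 ≤ I(t) + log t − I₀ ≤ π t / 2, where I(t) = ∫₀^∞ (s e^{-s})/(s² + t²) ds. -/
open MeasureTheory Real

noncomputable def I (t : ℝ) : ℝ := ∫ s in Set.Ioi (0:ℝ), s * Real.exp (-s) / (s ^ 2 + t ^ 2)

noncomputable def I₀ : ℝ := ∫ s in Set.Ioi (0:ℝ), Real.exp (-s) * Real.log s

/-!
Integrating by parts against `e^{-s}` turns `I t + log t - I₀` into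
`∫₀^∞ e^{-s} (log √(s² + t²) - log s) ds`. The kernel `logGap t s = log (1 + (t / s)²) / 2` is
nonnegative and has the explicit primitive `s · logGap t s + t · arctan (s / t)`, which vanishes
at `0` and tends to `π t / 2` at `∞`. So the kernel integrates to `π t / 2`, and `0 < e^{-s} ≤ 1`
gives both bounds.
-/

open Set Filter Topology

lemma norm_exp_neg_le_one {s : ℝ} (hs : 0 ≤ s) : ‖exp (-s)‖ ≤ 1 := by
  rw [norm_of_nonneg (exp_pos _).le, exp_le_one_iff]
  linarith

lemma integrableOn_mul_exp_neg : IntegrableOn (fun s : ℝ => s * exp (-s)) (Ioi 0) := by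
  refine (GammaIntegral_convergent two_pos).congr_fun (fun s _ => ?_) measurableSet_Ioi
  show exp (-s) * s ^ ((2 : ℝ) - 1) = s * exp (-s)
  norm_num [mul_comm]

lemma integrableOn_exp_neg_mul_log : IntegrableOn (fun s => exp (-s) * log s) (Ioi 0) := by
  rw [← Ioc_union_Ioi_eq_Ioi zero_le_one]
  refine .union ?_ ?_
  · exact (intervalIntegral.intervalIntegrable_log'.1 : IntegrableOn log (Ioc 0 1)).bdd_mul
      (continuous_exp.comp continuous_neg).aestronglyMeasurable
      (ae_restrict_of_forall_mem measurableSet_Ioc fun s hs => norm_exp_neg_le_one hs.1.le)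
  · refine (integrableOn_mul_exp_neg.mono_set (Ioi_subset_Ioi zero_le_one)).mono'
      (by fun_prop) (ae_restrict_of_forall_mem measurableSet_Ioi fun s hs => ?_)
    have hs : 1 < s := hs
    rw [norm_mul, norm_of_nonneg (exp_pos _).le, norm_of_nonneg (log_nonneg hs.le), mul_comm]
    gcongr
    exact log_le_self (by linarith)

noncomputable def logGap (t s : ℝ) : ℝ := log (s ^ 2 + t ^ 2) / 2 - log s

noncomputable def logGapPrimitive (t s : ℝ) : ℝ :=
  s * log (s ^ 2 + t ^ 2) / 2 - s * log s + t * arctan (s / t)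

section logGap

variable {t s : ℝ}

lemma logGap_eq (hs : 0 < s) : logGap t s = log (1 + (t / s) ^ 2) / 2 := by
  rw [logGap, show 1 + (t / s) ^ 2 = (s ^ 2 + t ^ 2) / s ^ 2 by field_simp,
    log_div (by positivity) (by positivity), log_pow]
  push_cast
  ring

lemma logGap_nonneg (hs : 0 < s) : 0 ≤ logGap t s := by
  rw [logGap_eq hs]
  have := log_nonneg (le_add_of_nonneg_right (sq_nonneg (t / s)))
  positivity

lemma logGap_le (hs : 0 < s) : logGap t s ≤ t ^ 2 / 2 * s⁻¹ ^ 2 := by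
  rw [logGap_eq hs]
  have := log_le_sub_one_of_pos (show 0 < 1 + (t / s) ^ 2 by positivity)
  rw [div_eq_mul_inv t s, mul_pow] at this ⊢
  linarith

lemma continuous_logGapPrimitive (ht : t ≠ 0) : Continuous (logGapPrimitive t) := by
  have hq : ∀ s : ℝ, s ^ 2 + t ^ 2 ≠ 0 := fun s => by positivity
  unfold logGapPrimitive
  have := continuous_mul_log
  fun_prop (disch := exact hq _)

lemma hasDerivAt_logGapPrimitive (ht : t ≠ 0) (hs : s ≠ 0) :
    HasDerivAt (logGapPrimitive t) (logGap t s) s := by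
  have hq : s ^ 2 + t ^ 2 ≠ 0 := by positivity
  have hlog : HasDerivAt (fun s => log (s ^ 2 + t ^ 2)) (2 * s / (s ^ 2 + t ^ 2)) s := by
    simpa using ((hasDerivAt_pow 2 s).add_const (t ^ 2)).log hq
  have harctan : HasDerivAt (fun s => arctan (s / t)) (1 / (1 + (s / t) ^ 2) * (1 / t)) s := by
    simpa [div_eq_mul_inv] using ((hasDerivAt_id s).div_const t).arctan
  have h : HasDerivAt (logGapPrimitive t) ((1 * log (s ^ 2 + t ^ 2) + s * (2 * s / (s ^ 2 + t ^ 2))) / 2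
      - (1 * log s + s * s⁻¹) + t * (1 / (1 + (s / t) ^ 2) * (1 / t))) s :=
    ((((hasDerivAt_id' s).mul hlog).div_const 2).sub
      ((hasDerivAt_id' s).mul (hasDerivAt_log hs))).add (harctan.const_mul t)
  convert h using 1
  rw [logGap]
  field_simp
  ring

lemma tendsto_logGapPrimitive_atTop (ht : 0 < t) :
    Tendsto (logGapPrimitive t) atTop (𝓝 (π * t / 2)) := by
  have hmain : Tendsto (fun s => s * logGap t s) atTop (𝓝 0) := by
    refine squeeze_zero' (g := fun s => t ^ 2 / 2 * s⁻¹) ?_ ?_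
      (by simpa using (tendsto_inv_atTop_zero (𝕜 := ℝ)).const_mul (t ^ 2 / 2))
    · filter_upwards [eventually_gt_atTop 0] with s hs
      exact mul_nonneg hs.le (logGap_nonneg hs)
    · filter_upwards [eventually_gt_atTop 0] with s hs
      calc s * logGap t s ≤ s * (t ^ 2 / 2 * s⁻¹ ^ 2) := by gcongr; exact logGap_le hs
        _ = t ^ 2 / 2 * s⁻¹ := by field_simp
  have harctan : Tendsto (fun s => t * arctan (s / t)) atTop (𝓝 (t * (π / 2))) :=
    ((tendsto_arctan_atTop.mono_right nhdsWithin_le_nhds).comp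
      (tendsto_id.atTop_div_const ht)).const_mul t
  convert hmain.add harctan using 1
  · ext s; simp only [logGapPrimitive, logGap]; ring
  · congr 1; ring

lemma integrableOn_logGap (ht : 0 < t) : IntegrableOn (logGap t) (Ioi 0) :=
  integrableOn_Ioi_deriv_of_nonneg (continuous_logGapPrimitive ht.ne').continuousWithinAt
    (fun _ hs => hasDerivAt_logGapPrimitive ht.ne' hs.out.ne') (fun _ hs => logGap_nonneg hs)
    (tendsto_logGapPrimitive_atTop ht)

lemma integral_logGap (ht : 0 < t) : ∫ s in Ioi 0, logGap t s = π * t / 2 := by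
  rw [integral_Ioi_of_hasDerivAt_of_nonneg (continuous_logGapPrimitive ht.ne').continuousWithinAt
    (fun _ hs => hasDerivAt_logGapPrimitive ht.ne' hs.out.ne') (fun _ hs => logGap_nonneg hs)
    (tendsto_logGapPrimitive_atTop ht)]
  simp [logGapPrimitive]

lemma integrableOn_exp_neg_mul_logGap (ht : 0 < t) :
    IntegrableOn (fun s => exp (-s) * logGap t s) (Ioi 0) :=
  (integrableOn_logGap ht).bdd_mul (by fun_prop)
    (ae_restrict_of_forall_mem measurableSet_Ioi fun _ hs => norm_exp_neg_le_one hs.out.le)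

end logGap

section IntegrationByParts

variable {t : ℝ}

lemma integrableOn_mul_exp_neg_div_sq_add_sq (ht : t ≠ 0) :
    IntegrableOn (fun s => s * exp (-s) / (s ^ 2 + t ^ 2)) (Ioi 0) := by
  refine (integrableOn_mul_exp_neg.div_const (t ^ 2)).mono'
    (Measurable.aestronglyMeasurable (by fun_prop))
    (ae_restrict_of_forall_mem measurableSet_Ioi fun s hs => ?_)
  have hs : 0 < s := hs
  rw [norm_of_nonneg (by positivity)]
  exact div_le_div_of_nonneg_left (by positivity) (by positivity) (by nlinarith)

lemma integrableOn_exp_neg_mul_log_sq_add_sq (ht : 0 < t) :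
    IntegrableOn (fun s => exp (-s) * (log (s ^ 2 + t ^ 2) / 2)) (Ioi 0) := by
  refine ((integrableOn_exp_neg_mul_logGap ht).add integrableOn_exp_neg_mul_log).congr_fun
    (fun s _ => ?_) measurableSet_Ioi
  simp only [Pi.add_apply, logGap]
  ring

lemma hasDerivAt_exp_neg_mul_log_sq_add_sq (ht : t ≠ 0) (s : ℝ) :
    HasDerivAt (fun s => exp (-s) * (log (s ^ 2 + t ^ 2) / 2))
      (s * exp (-s) / (s ^ 2 + t ^ 2) - exp (-s) * (log (s ^ 2 + t ^ 2) / 2)) s := by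
  have hlog : HasDerivAt (fun s => log (s ^ 2 + t ^ 2)) (2 * s / (s ^ 2 + t ^ 2)) s := by
    simpa using ((hasDerivAt_pow 2 s).add_const (t ^ 2)).log (by positivity)
  have h : HasDerivAt (fun s => exp (-s) * (log (s ^ 2 + t ^ 2) / 2))
      (exp (-s) * -1 * (log (s ^ 2 + t ^ 2) / 2) + exp (-s) * (2 * s / (s ^ 2 + t ^ 2) / 2)) s :=
    (hasDerivAt_neg s).exp.mul (hlog.div_const 2)
  convert h using 1
  ring

lemma integral_mul_exp_neg_div_sq_add_sq (ht : 0 < t) :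
    ∫ s in Ioi 0, s * exp (-s) / (s ^ 2 + t ^ 2)
      = (∫ s in Ioi 0, exp (-s) * (log (s ^ 2 + t ^ 2) / 2)) - log t := by
  have hderiv := hasDerivAt_exp_neg_mul_log_sq_add_sq ht.ne'
  have hint := (integrableOn_mul_exp_neg_div_sq_add_sq ht.ne').sub
    (integrableOn_exp_neg_mul_log_sq_add_sq ht)
  have hlim := tendsto_zero_of_hasDerivAt_of_integrableOn_Ioi (fun s _ => hderiv s) hint
    (integrableOn_exp_neg_mul_log_sq_add_sq ht)
  have key := integral_Ioi_of_hasDerivAt_of_tendsto (hderiv 0).continuousAt.continuousWithinAt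
    (fun s _ => hderiv s) hint hlim
  rw [integral_sub (integrableOn_mul_exp_neg_div_sq_add_sq ht.ne')
    (integrableOn_exp_neg_mul_log_sq_add_sq ht)] at key
  norm_num [log_pow] at key
  linarith

end IntegrationByParts

lemma I_add_log_sub_I₀_eq_integral {t : ℝ} (ht : 0 < t) :
    I t + log t - I₀ = ∫ s in Ioi 0, exp (-s) * logGap t s := by
  rw [I, I₀, integral_mul_exp_neg_div_sq_add_sq ht, sub_add_cancel,
    ← integral_sub (integrableOn_exp_neg_mul_log_sq_add_sq ht) integrableOn_exp_neg_mul_log]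
  congr 1 with s
  rw [logGap]
  ring

theorem I_log_bounds (t : ℝ) (ht : 0 < t) :
    0 ≤ I t + Real.log t - I₀ ∧ I t + Real.log t - I₀ ≤ π * t / 2 := by
  rw [I_add_log_sub_I₀_eq_integral ht]
  constructor
  · exact setIntegral_nonneg measurableSet_Ioi fun s hs =>
      mul_nonneg (exp_pos _).le (logGap_nonneg hs)
  · rw [← integral_logGap ht]
    exact setIntegral_mono_on (integrableOn_exp_neg_mul_logGap ht) (integrableOn_logGap ht)
      measurableSet_Ioi fun s hs =>
        mul_le_of_le_one_left (logGap_nonneg hs) (exp_le_one_iff.2 (by linarith [hs.out]))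
end

section
/- For every t > 0, ∫₀^∞ (s e^{-s})/(s² + t²) ds = ∫₀^∞ (cos s)/(s + t) ds, where the right-hand side is interpreted as an improper Riemann integral (limit of ∫₀^R as R → ∞). -/
/-!
Integrating by parts, `∫₀^R cos s / (s + t) = sin R / (R + t) + ∫₀^R sin s / (s + t)²`, and the
boundary term vanishes, so the improper integral equals the absolutely convergent
`∫₀^∞ sin s / (s + t)²`. Writing `1 / (s + t)² = ∫₀^∞ u e^{-(s+t)u} du` and swapping the
integrals (Fubini, dominated by `u e^{-(s+t)u}`), the inner integral `∫₀^∞ sin s e^{-us} ds` is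
`1 / (1 + u²)`, which leaves `∫₀^∞ u e^{-tu} / (1 + u²) du`; the substitution `v = t u` turns
this into the left-hand side.
-/

open MeasureTheory Real Filter Set

lemma integrableOn_mul_exp_neg_mul_Ioi {c : ℝ} (hc : 0 < c) :
    IntegrableOn (fun x : ℝ => x * exp (-(c * x))) (Ioi 0) := by
  simpa using integrableOn_rpow_mul_exp_neg_mul_rpow (s := 1) (p := 1) (by norm_num) one_pos hc

lemma integral_mul_exp_neg_mul_Ioi {c : ℝ} (hc : 0 < c) :
    ∫ x in Ioi (0 : ℝ), x * exp (-(c * x)) = (c ^ 2)⁻¹ := by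
  have hGamma := integral_rpow_mul_exp_neg_mul_Ioi two_pos hc
  norm_num [Gamma_two] at hGamma
  exact hGamma

lemma integral_sin_mul_exp_neg_mul_Ioi {u : ℝ} (hu : 0 < u) :
    ∫ s in Ioi (0 : ℝ), sin s * exp (-(u * s)) = (1 + u ^ 2)⁻¹ := by
  have hre : (-u + Complex.I).re < 0 := by simpa using hu
  have him (s : ℝ) : sin s * exp (-(u * s)) = (Complex.exp ((-u + Complex.I) * s)).im := by
    simp [Complex.exp_im, mul_comm]
  have hcomm := integral_im (integrableOn_exp_mul_complex_Ioi hre 0)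
  simp only [RCLike.im_to_complex] at hcomm
  simp_rw [him, hcomm, integral_exp_mul_complex_Ioi hre 0]
  simp [Complex.normSq_apply, ← sq, add_comm, neg_div]

lemma integrableOn_inv_add_sq_Ioi {t : ℝ} (ht : 0 < t) :
    IntegrableOn (fun s : ℝ => ((s + t) ^ 2)⁻¹) (Ioi 0) := by
  refine (integrableOn_add_rpow_Ioi_of_lt (a := -2) (by norm_num) (by linarith : -t < 0)).congr_fun
    (fun s hs => ?_) measurableSet_Ioi
  have hst : 0 < s + t := by linarith [hs.out]
  simp [rpow_neg hst.le]

lemma integrableOn_sin_div_add_sq_Ioi {t : ℝ} (ht : 0 < t) :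
    IntegrableOn (fun s : ℝ => sin s / (s + t) ^ 2) (Ioi 0) := by
  refine (integrableOn_inv_add_sq_Ioi ht).mono'
    (by fun_prop : Measurable fun s : ℝ => sin s / (s + t) ^ 2).aestronglyMeasurable ?_
  filter_upwards with s
  rw [norm_div, norm_pow, Real.norm_eq_abs, Real.norm_eq_abs, sq_abs, div_eq_mul_inv]
  exact mul_le_of_le_one_left (by positivity) (abs_sin_le_one s)

lemma tendsto_sin_div_add_atTop (t : ℝ) :
    Tendsto (fun R : ℝ => sin R / (R + t)) atTop (nhds 0) := by
  simpa [div_eq_mul_inv] using isBoundedUnder_le_mul_tendsto_zero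
    (isBoundedUnder_of ⟨1, fun R => by simpa using abs_sin_le_one R⟩)
    (tendsto_atTop_add_const_right _ t tendsto_id).inv_tendsto_atTop

lemma integrable_mul_exp_neg_add_mul_prod {t : ℝ} (ht : 0 < t) :
    Integrable (fun p : ℝ × ℝ => p.2 * exp (-((p.1 + t) * p.2)))
      ((volume.restrict (Ioi 0)).prod (volume.restrict (Ioi 0))) := by
  rw [integrable_prod_iff (by fun_prop)]
  constructor
  · filter_upwards [ae_restrict_mem measurableSet_Ioi] with s hs
    exact integrableOn_mul_exp_neg_mul_Ioi (by linarith [hs.out])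
  · refine (integrableOn_inv_add_sq_Ioi ht).congr_fun (fun s hs => ?_) measurableSet_Ioi
    have hst : 0 < s + t := by linarith [hs.out]
    dsimp only
    rw [← integral_mul_exp_neg_mul_Ioi hst]
    refine setIntegral_congr_fun measurableSet_Ioi fun u hu => ?_
    simp [abs_of_pos hu.out]

lemma integral_sin_div_add_sq_Ioi {t : ℝ} (ht : 0 < t) :
    ∫ s in Ioi (0 : ℝ), sin s / (s + t) ^ 2
      = ∫ u in Ioi (0 : ℝ), u * exp (-(t * u)) / (1 + u ^ 2) := by
  have hint : Integrable (fun p : ℝ × ℝ => sin p.1 * (p.2 * exp (-((p.1 + t) * p.2))))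
      ((volume.restrict (Ioi 0)).prod (volume.restrict (Ioi 0))) :=
    (integrable_mul_exp_neg_add_mul_prod ht).bdd_mul (c := 1) (by fun_prop)
      (.of_forall fun p => by simpa using abs_sin_le_one p.1)
  calc ∫ s in Ioi (0 : ℝ), sin s / (s + t) ^ 2
      = ∫ s in Ioi (0 : ℝ), ∫ u in Ioi (0 : ℝ), sin s * (u * exp (-((s + t) * u))) := by
        refine setIntegral_congr_fun measurableSet_Ioi fun s hs => ?_
        rw [integral_const_mul, integral_mul_exp_neg_mul_Ioi (by linarith [hs.out]), div_eq_mul_inv]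
    _ = ∫ u in Ioi (0 : ℝ), ∫ s in Ioi (0 : ℝ), sin s * (u * exp (-((s + t) * u))) :=
        integral_integral_swap hint
    _ = ∫ u in Ioi (0 : ℝ), u * exp (-(t * u)) / (1 + u ^ 2) := by
        refine setIntegral_congr_fun measurableSet_Ioi fun u hu => ?_
        have hsplit (s : ℝ) : sin s * (u * exp (-((s + t) * u)))
            = u * exp (-(t * u)) * (sin s * exp (-(u * s))) := by
          rw [show -((s + t) * u) = -(u * s) + -(t * u) by ring, exp_add]
          ring
        simp_rw [hsplit]
        rw [integral_const_mul, integral_sin_mul_exp_neg_mul_Ioi hu.out, div_eq_mul_inv]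

lemma integral_mul_exp_neg_mul_div_one_add_sq_Ioi {t : ℝ} (ht : 0 < t) :
    ∫ u in Ioi (0 : ℝ), u * exp (-(t * u)) / (1 + u ^ 2)
      = ∫ v in Ioi (0 : ℝ), v * exp (-v) / (v ^ 2 + t ^ 2) := by
  have hscale := integral_comp_mul_left_Ioi' (fun v => v * exp (-v) / (v ^ 2 + t ^ 2)) 0 ht
  rw [mul_zero] at hscale
  rw [← hscale, smul_eq_mul, ← integral_const_mul]
  refine setIntegral_congr_fun measurableSet_Ioi fun u _ => ?_
  field_simp
  ring

lemma intervalIntegral_cos_div_add {t R : ℝ} (ht : 0 < t) (hR : 0 ≤ R) :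
    ∫ s in (0 : ℝ)..R, cos s / (s + t)
      = sin R / (R + t) + ∫ s in (0 : ℝ)..R, sin s / (s + t) ^ 2 := by
  have hpos : ∀ s ∈ uIcc 0 R, s + t ≠ 0 := fun s hs => by
    rw [uIcc_of_le hR] at hs
    linarith [hs.1]
  have hderiv : ∀ s ∈ uIcc 0 R, HasDerivAt (fun s => sin s / (s + t))
      (cos s / (s + t) - sin s / (s + t) ^ 2) s := fun s hs => by
    refine ((hasDerivAt_sin s).div ((hasDerivAt_id' s).add_const t) (hpos s hs)).congr_deriv ?_
    field_simp
  have hcos : ContinuousOn (fun s => cos s / (s + t)) (uIcc 0 R) :=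
    continuous_cos.continuousOn.div (by fun_prop) hpos
  have hsin : ContinuousOn (fun s => sin s / (s + t) ^ 2) (uIcc 0 R) :=
    continuous_sin.continuousOn.div (by fun_prop) fun s hs => pow_ne_zero 2 (hpos s hs)
  have hftc := intervalIntegral.integral_eq_sub_of_hasDerivAt hderiv
    (hcos.sub hsin).intervalIntegrable
  rw [intervalIntegral.integral_sub hcos.intervalIntegrable hsin.intervalIntegrable] at hftc
  simp only [sin_zero, zero_div, sub_zero] at hftc
  linarith

theorem I_eq_improper_cos (t : ℝ) (ht : 0 < t) :
    Tendsto (fun R : ℝ => ∫ s in (0:ℝ)..R, Real.cos s / (s + t)) atTop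
      (nhds (∫ s in Set.Ioi (0:ℝ), s * Real.exp (-s) / (s ^ 2 + t ^ 2))) := by
  rw [← integral_mul_exp_neg_mul_div_one_add_sq_Ioi ht, ← integral_sin_div_add_sq_Ioi ht]
  have hparts : ∀ᶠ R in atTop, sin R / (R + t) + ∫ s in (0 : ℝ)..R, sin s / (s + t) ^ 2
      = ∫ s in (0 : ℝ)..R, cos s / (s + t) := by
    filter_upwards [eventually_ge_atTop 0] with R hR
    exact (intervalIntegral_cos_div_add ht hR).symm
  refine Tendsto.congr' hparts ?_
  simpa using (tendsto_sin_div_add_atTop t).add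
    (intervalIntegral_tendsto_integral_Ioi 0 (integrableOn_sin_div_add_sq_Ioi ht) tendsto_id)
end

section
/- For every t > 0, 2 I'(2t) − I'(t) > 0 and 8 I'(2t) − I'(t) < 0, where I'(t) = −∫₀^∞ (s² e^{-st})/(s² + 1) ds. Consequently 1/8 < I'(2t)/I'(t) < 1/2 for all t > 0. -/
/-!
Write `I' t = -J 1 t` with `J c t = ∫₀^∞ s² e^{-st} / (s² + c) ds` (`sqRatioLaplace c t`).
The substitution `s ↦ 2s` gives `I' (2t) = -J 4 t / 2`, so both inequalities reduce to
comparing integrands pointwise: `s² / (s² + 4) < s² / (s² + 1)` and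
`s² / (s² + 1) < 4 s² / (s² + 4)` for `s > 0`. Together, `J 4 t < J 1 t < 4 J 4 t` also force
`J 1 t > 0`, which gives the ratio bounds.
-/

open MeasureTheory Real

noncomputable def I' (t : ℝ) : ℝ := -∫ s in Set.Ioi (0:ℝ), s ^ 2 * Real.exp (-(s * t)) / (s ^ 2 + 1)

open Set

theorem setIntegral_lt_setIntegral_of_forall_lt {X : Type*} [MeasurableSpace X] {μ : Measure X}
    {s : Set X} {f g : X → ℝ} (hs : MeasurableSet s) (hμs : μ s ≠ 0)
    (hf : IntegrableOn f s μ) (hg : IntegrableOn g s μ) (hlt : ∀ x ∈ s, f x < g x) :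
    ∫ x in s, f x ∂μ < ∫ x in s, g x ∂μ := by
  have hsupp : s ⊆ Function.support (fun x => g x - f x) ∩ s := fun x hx =>
    ⟨(sub_pos.mpr (hlt x hx)).ne', hx⟩
  rw [← sub_pos, ← integral_sub hg hf,
    setIntegral_pos_iff_support_of_nonneg_ae (f := fun x => g x - f x) _ (hg.sub hf)]
  · exact (pos_iff_ne_zero.mpr hμs).trans_le (measure_mono hsupp)
  · filter_upwards [ae_restrict_mem hs] with x hx
    exact (sub_pos.mpr (hlt x hx)).le

noncomputable def sqRatioLaplace (c t : ℝ) : ℝ :=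
  ∫ s in Ioi 0, s ^ 2 * exp (-(s * t)) / (s ^ 2 + c)

theorem integrableOn_sqRatioLaplace {c t : ℝ} (hc : 0 ≤ c) (ht : 0 < t) :
    IntegrableOn (fun s => s ^ 2 * exp (-(s * t)) / (s ^ 2 + c)) (Ioi 0) := by
  refine (exp_neg_integrableOn_Ioi 0 ht).mono'
    (Measurable.aestronglyMeasurable (by fun_prop)) (ae_of_all _ fun s => ?_)
  have hratio : s ^ 2 / (s ^ 2 + c) ≤ 1 := div_le_one_of_le₀ (by linarith) (by positivity)
  calc ‖s ^ 2 * exp (-(s * t)) / (s ^ 2 + c)‖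
      = s ^ 2 / (s ^ 2 + c) * exp (-t * s) := by
        rw [norm_of_nonneg (by positivity)]; ring_nf
    _ ≤ exp (-t * s) := mul_le_of_le_one_left (exp_pos _).le hratio

theorem sqRatioLaplace_mul (c t : ℝ) {a : ℝ} (ha : 0 < a) :
    sqRatioLaplace c (a * t) = a⁻¹ * sqRatioLaplace (a ^ 2 * c) t := by
  have hsubst := integral_comp_mul_left_Ioi
    (fun u => u ^ 2 * exp (-(u * t)) / (u ^ 2 + a ^ 2 * c)) 0 ha
  rw [mul_zero, smul_eq_mul] at hsubst
  rw [sqRatioLaplace, sqRatioLaplace, ← hsubst]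
  refine setIntegral_congr_fun measurableSet_Ioi fun s _ => ?_
  have ha2 : a ^ 2 ≠ 0 := by positivity
  calc s ^ 2 * exp (-(s * (a * t))) / (s ^ 2 + c)
      = a ^ 2 * (s ^ 2 * exp (-(s * (a * t)))) / (a ^ 2 * (s ^ 2 + c)) :=
        (mul_div_mul_left _ _ ha2).symm
    _ = (a * s) ^ 2 * exp (-(a * s * t)) / ((a * s) ^ 2 + a ^ 2 * c) := by ring_nf

theorem sqRatioLaplace_lt_of_lt {c c' t : ℝ} (hc : 0 ≤ c) (hcc' : c < c') (ht : 0 < t) :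
    sqRatioLaplace c' t < sqRatioLaplace c t := by
  refine setIntegral_lt_setIntegral_of_forall_lt measurableSet_Ioi (by simp)
    (integrableOn_sqRatioLaplace (hc.trans hcc'.le) ht) (integrableOn_sqRatioLaplace hc ht)
    fun s (hs : 0 < s) => ?_
  exact div_lt_div_of_pos_left (by positivity) (by positivity) (by linarith)

theorem mul_sqRatioLaplace_lt_of_lt {c c' t : ℝ} (hc : 0 ≤ c) (hcc' : c < c') (ht : 0 < t) :
    c * sqRatioLaplace c t < c' * sqRatioLaplace c' t := by
  have hc' : 0 < c' := hc.trans_lt hcc'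
  rw [sqRatioLaplace, sqRatioLaplace, ← integral_const_mul, ← integral_const_mul]
  refine setIntegral_lt_setIntegral_of_forall_lt measurableSet_Ioi (by simp)
    ((integrableOn_sqRatioLaplace hc ht).const_mul c)
    ((integrableOn_sqRatioLaplace hc'.le ht).const_mul c') fun s (hs : 0 < s) => ?_
  have hw : 0 < s ^ 4 * exp (-(s * t)) := by positivity
  rw [mul_div_assoc', mul_div_assoc', div_lt_div_iff₀ (by positivity) (by positivity)]
  -- the cross terms `c c' s² e^{-st}` cancel, leaving `c s⁴ e^{-st} < c' s⁴ e^{-st}`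
  nlinarith [mul_lt_mul_of_pos_right hcc' hw]

theorem I'_ratio_bounds (t : ℝ) (ht : 0 < t) :
    (0 < 2 * I' (2 * t) - I' t ∧ 8 * I' (2 * t) - I' t < 0) ∧
    (1 / 8 < I' (2 * t) / I' t ∧ I' (2 * t) / I' t < 1 / 2) := by
  have hI't : I' t = -sqRatioLaplace 1 t := rfl
  have hI'2t : I' (2 * t) = -(2⁻¹ * sqRatioLaplace 4 t) := by
    show -sqRatioLaplace 1 (2 * t) = _
    rw [sqRatioLaplace_mul 1 t two_pos]
    norm_num
  have hanti : sqRatioLaplace 4 t < sqRatioLaplace 1 t :=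
    sqRatioLaplace_lt_of_lt zero_le_one (by norm_num) ht
  have hmono : 1 * sqRatioLaplace 1 t < 4 * sqRatioLaplace 4 t :=
    mul_sqRatioLaplace_lt_of_lt zero_le_one (by norm_num) ht
  have hneg : I' t < 0 := by linarith
  refine ⟨⟨by linarith, by linarith⟩, ?_, ?_⟩
  · rw [lt_div_iff_of_neg hneg]; linarith
  · rw [div_lt_iff_of_neg hneg]; linarith
end

section
/- With I'(t) = −∫₀^∞ (s² e^{-st})/(s²+1) ds, one has t³ I'(t) → −2 as t → ∞ and t I'(t) → −1 as t → 0⁺. In particular I'(2t)/I'(t) → 1/8 as t → ∞ and I'(2t)/I'(t) → 1/2 as t → 0⁺. -/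
/-!
Substituting `u = s t` gives `t I'(t) = -∫₀^∞ u² / (u² + t²) e^{-u} du`. The weights
`u² / (u² + t²)` (as `t → 0⁺`) and `t² / (t² + u²)` (as `t → ∞`) lie in `[0, 1]` and tend to `1`,
so dominated convergence against `e^{-u}` and `u² e^{-u}` gives `t I'(t) → -Γ(1) = -1` and
`t³ I'(t) = -∫₀^∞ t² / (t² + u²) u² e^{-u} du → -Γ(3) = -2`. Since `I'(t)` is then asymptotic to a
nonzero multiple of `t⁻³`, resp. `t⁻¹`, the ratio `I'(2t) / I'(t)` tends to `2⁻³`, resp. `2⁻¹`.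
-/

open MeasureTheory Real Filter

open Set Topology

theorem tendsto_integral_mul_of_tendsto_of_norm_le {ι α : Type*} [MeasurableSpace α]
    {μ : Measure α} {l : Filter ι} [l.IsCountablyGenerated] {φ : ι → α → ℝ} {ψ g : α → ℝ}
    {C : ℝ} (hg : Integrable g μ) (hφ_meas : ∀ᶠ i in l, AEStronglyMeasurable (φ i) μ)
    (hφ_le : ∀ᶠ i in l, ∀ᵐ x ∂μ, ‖φ i x‖ ≤ C)
    (hφ_lim : ∀ᵐ x ∂μ, Tendsto (fun i => φ i x) l (𝓝 (ψ x))) :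
    Tendsto (fun i => ∫ x, φ i x * g x ∂μ) l (𝓝 (∫ x, ψ x * g x ∂μ)) := by
  refine tendsto_integral_filter_of_dominated_convergence (fun x => C * ‖g x‖)
    (hφ_meas.mono fun i hi => hi.mul hg.aestronglyMeasurable) ?_ (hg.norm.const_mul C)
    (hφ_lim.mono fun x hx => hx.mul_const _)
  filter_upwards [hφ_le] with i hi
  filter_upwards [hi] with x hx
  rw [norm_mul]
  exact mul_le_mul_of_nonneg_right hx (norm_nonneg _)

theorem tendsto_div_of_tendsto_pow_mul {f : ℝ → ℝ} {l : Filter ℝ} {k : ℕ} {c L : ℝ}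
    (hc : c ≠ 0) (hL : L ≠ 0) (hcl : Tendsto (fun t => c * t) l l) (hl : ∀ᶠ t in l, t ≠ 0)
    (hf : Tendsto (fun t => t ^ k * f t) l (𝓝 L)) :
    Tendsto (fun t => f (c * t) / f t) l (𝓝 (1 / c ^ k)) := by
  have hratio := ((hf.comp hcl).div hf hL).div_const (c ^ k)
  rw [div_self hL] at hratio
  refine hratio.congr' ?_
  filter_upwards [hl] with t ht
  simp only [Pi.div_apply, Function.comp_apply, mul_pow]
  rw [mul_comm (c ^ k), mul_assoc, mul_div_mul_left _ _ (pow_ne_zero k ht), mul_div_assoc,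
    mul_div_cancel_left₀ _ (pow_ne_zero k hc)]

theorem tendsto_const_mul_nhdsGT_zero {c : ℝ} (hc : 0 < c) :
    Tendsto (fun t => c * t) (𝓝[>] 0) (𝓝[>] 0) := by
  refine tendsto_nhdsWithin_iff.mpr
    ⟨?_, eventually_mem_nhdsWithin.mono fun t ht => mem_Ioi.mpr (mul_pos hc ht)⟩
  simpa using ((continuous_const_mul c).tendsto 0).mono_left nhdsWithin_le_nhds

theorem integrableOn_pow_mul_exp_neg_Ioi (n : ℕ) :
    IntegrableOn (fun u : ℝ => u ^ n * exp (-u)) (Ioi 0) := by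
  convert GammaIntegral_convergent (s := n + 1) (by positivity) using 2 with u
  rw [add_sub_cancel_right, rpow_natCast, mul_comm]

theorem integral_pow_mul_exp_neg_Ioi (n : ℕ) :
    ∫ u in Ioi (0 : ℝ), u ^ n * exp (-u) = n.factorial := by
  rw [← Gamma_nat_eq_factorial, Gamma_eq_integral (by positivity)]
  congr 1 with u
  rw [add_sub_cancel_right, rpow_natCast, mul_comm]

theorem mul_I'_eq {t : ℝ} (ht : 0 < t) :
    t * I' t = -∫ u in Ioi 0, u ^ 2 / (u ^ 2 + t ^ 2) * exp (-u) := by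
  have hsub := integral_comp_mul_left_Ioi (fun u => u ^ 2 / (u ^ 2 + t ^ 2) * exp (-u)) 0 ht
  rw [mul_zero, smul_eq_mul] at hsub
  have hscale : ∫ s in Ioi 0, s ^ 2 * exp (-(s * t)) / (s ^ 2 + 1) =
      ∫ s in Ioi 0, (t * s) ^ 2 / ((t * s) ^ 2 + t ^ 2) * exp (-(t * s)) := by
    refine setIntegral_congr_fun measurableSet_Ioi fun s _ => ?_
    field_simp
  rw [I', hscale, hsub, mul_neg, ← mul_assoc, mul_inv_cancel₀ ht.ne', one_mul]

theorem norm_sq_div_sq_add_sq_le_one (a b : ℝ) : ‖a ^ 2 / (a ^ 2 + b ^ 2)‖ ≤ 1 := by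
  rw [norm_of_nonneg (by positivity)]
  exact div_le_one_of_le₀ (le_add_of_nonneg_right (sq_nonneg b)) (by positivity)

theorem tendsto_sq_div_sq_add_sq_atTop (b : ℝ) :
    Tendsto (fun a : ℝ => a ^ 2 / (a ^ 2 + b ^ 2)) atTop (𝓝 1) := by
  have hsmall : Tendsto (fun a : ℝ => b ^ 2 / (a ^ 2 + b ^ 2)) atTop (𝓝 0) :=
    tendsto_const_nhds.div_atTop <|
      tendsto_atTop_add_const_right _ _ (tendsto_pow_atTop two_ne_zero)
  rw [← sub_zero 1]
  refine (tendsto_const_nhds.sub hsmall).congr' ?_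
  filter_upwards [eventually_gt_atTop 0] with a ha
  field_simp
  ring

theorem tendsto_sq_div_sq_add_sq_zero {a : ℝ} (ha : a ≠ 0) :
    Tendsto (fun b : ℝ => a ^ 2 / (a ^ 2 + b ^ 2)) (𝓝 0) (𝓝 1) := by
  have hcont : ContinuousAt (fun b : ℝ => a ^ 2 / (a ^ 2 + b ^ 2)) 0 :=
    continuousAt_const.div (by fun_prop) (by positivity)
  simpa [ha] using hcont.tendsto

theorem tendsto_pow_three_mul_I'_atTop : Tendsto (fun t => t ^ 3 * I' t) atTop (𝓝 (-2)) := by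
  have hlim := tendsto_integral_mul_of_tendsto_of_norm_le (l := atTop)
    (φ := fun t u => t ^ 2 / (t ^ 2 + u ^ 2)) (ψ := fun _ => 1)
    (integrableOn_pow_mul_exp_neg_Ioi 2)
    (.of_forall fun _ => (by fun_prop : Measurable _).aestronglyMeasurable)
    (.of_forall fun t => .of_forall fun u => norm_sq_div_sq_add_sq_le_one t u)
    (.of_forall fun u => tendsto_sq_div_sq_add_sq_atTop u)
  simp only [one_mul, integral_pow_mul_exp_neg_Ioi, Nat.factorial_two, Nat.cast_ofNat] at hlim
  refine hlim.neg.congr' ?_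
  filter_upwards [eventually_gt_atTop 0] with t ht
  rw [show t ^ 3 * I' t = t ^ 2 * (t * I' t) by ring, mul_I'_eq ht, mul_neg,
    ← integral_const_mul]
  congr 2 with u
  ring

theorem tendsto_mul_I'_nhdsGT_zero : Tendsto (fun t => t * I' t) (𝓝[>] 0) (𝓝 (-1)) := by
  have hlim := tendsto_integral_mul_of_tendsto_of_norm_le (l := 𝓝[>] 0)
    (φ := fun t u => u ^ 2 / (u ^ 2 + t ^ 2)) (ψ := fun _ => 1)
    (integrableOn_pow_mul_exp_neg_Ioi 0)
    (.of_forall fun _ => (by fun_prop : Measurable _).aestronglyMeasurable)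
    (.of_forall fun t => .of_forall fun u => norm_sq_div_sq_add_sq_le_one u t)
    ((ae_restrict_mem measurableSet_Ioi).mono fun u hu =>
      (tendsto_sq_div_sq_add_sq_zero (ne_of_gt hu)).mono_left nhdsWithin_le_nhds)
  simp only [pow_zero, one_mul, integral_exp_neg_Ioi_zero] at hlim
  refine hlim.neg.congr' ?_
  filter_upwards [self_mem_nhdsWithin] with t ht
  rw [mul_I'_eq ht]

theorem I'_limits :
    Tendsto (fun t => t ^ 3 * I' t) atTop (nhds (-2)) ∧
    Tendsto (fun t => t * I' t) (nhdsWithin 0 (Set.Ioi (0:ℝ))) (nhds (-1)) ∧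
    Tendsto (fun t => I' (2 * t) / I' t) atTop (nhds (1 / 8)) ∧
    Tendsto (fun t => I' (2 * t) / I' t) (nhdsWithin 0 (Set.Ioi (0:ℝ))) (nhds (1 / 2)) := by
  refine ⟨tendsto_pow_three_mul_I'_atTop, tendsto_mul_I'_nhdsGT_zero, ?_, ?_⟩
  · convert tendsto_div_of_tendsto_pow_mul two_ne_zero (by norm_num)
      (tendsto_id.const_mul_atTop two_pos) (eventually_ne_atTop 0) tendsto_pow_three_mul_I'_atTop
      using 2
    norm_num
  · simpa using tendsto_div_of_tendsto_pow_mul (k := 1) two_ne_zero (by norm_num : (-1 : ℝ) ≠ 0)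
      (tendsto_const_mul_nhdsGT_zero two_pos)
      (eventually_mem_nhdsWithin.mono fun t ht => ne_of_gt ht)
      (by simpa using tendsto_mul_I'_nhdsGT_zero)
end

section
/- For each q ∈ (1/8, 1/2) there exists exactly one t₀ > 0 with I'(2t₀) = q I'(t₀), where I'(t) = −∫₀^∞ (s² e^{-st})/(s²+1) ds. Equivalently, t ↦ I'(2t)/I'(t) is a bijection from (0,∞) onto (1/8, 1/2). -/
/-
Write `k_c s = s² / (s² + c)` and `L f t = ∫₀^∞ f s e^{-st} ds`. Then `I' t = -L k₁ t` and, after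
the substitution `s ↦ s / 2`, `I' (2t) = -L k₄ t / 2`, so the ratio in question is
`L k₄ / (2 L k₁)`.

Since `k₄ / k₁ = (s² + 1) / (s² + 4)` increases strictly, `L k₄ / L k₁` decreases strictly: by
Fubini, `L k₄ t₁ · L k₁ t₂ - L k₄ t₂ · L k₁ t₁` is a double integral over `(0, ∞)²` whose
symmetrization in `(s, u)` is positive off the diagonal. The ratio is continuous, and its limits
are read off from the kernels: as `t → 0⁺`, `L k₁ t ≥ 1/t - π/2` blows up while
`L (k₁ - k₄) ≤ 3π/2`; as `t → ∞`, the weight concentrates near `s = 0`, where `k₄ - k₁/4 = O(s⁴)`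
and `k₁ ≥ s² - s⁴`, so `∫₀^∞ sⁿ e^{-st} ds = n!/t^{n+1}` gives `L k₄ / L k₁ = 1/4 + O(t⁻²)`.
-/

open MeasureTheory Real Set Filter Topology
open scoped Nat

noncomputable def laplace (f : ℝ → ℝ) (t : ℝ) : ℝ := ∫ s in Ioi 0, f s * exp (-(s * t))

def LaplaceIntegrable (f : ℝ → ℝ) (t : ℝ) : Prop :=
  IntegrableOn (fun s => f s * exp (-(s * t))) (Ioi 0)

section Laplace

variable {f g : ℝ → ℝ} {t : ℝ}

lemma LaplaceIntegrable.add (hf : LaplaceIntegrable f t) (hg : LaplaceIntegrable g t) :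
    LaplaceIntegrable (fun s => f s + g s) t := by
  simp only [LaplaceIntegrable, add_mul]
  exact Integrable.add hf hg

lemma LaplaceIntegrable.sub (hf : LaplaceIntegrable f t) (hg : LaplaceIntegrable g t) :
    LaplaceIntegrable (fun s => f s - g s) t := by
  simp only [LaplaceIntegrable, sub_mul]
  exact Integrable.sub hf hg

lemma LaplaceIntegrable.const_mul (hf : LaplaceIntegrable f t) (c : ℝ) :
    LaplaceIntegrable (fun s => c * f s) t := by
  simp only [LaplaceIntegrable, mul_assoc]
  exact Integrable.const_mul hf c

lemma laplaceIntegrable_of_abs_le {C : ℝ} (hf : Measurable f) (hC : ∀ s, |f s| ≤ C)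
    (ht : 0 < t) : LaplaceIntegrable f t := by
  refine ((exp_neg_integrableOn_Ioi 0 ht).const_mul C).mono'
    (hf.mul (by fun_prop)).aestronglyMeasurable (ae_of_all _ fun s => ?_)
  rw [norm_mul, norm_of_nonneg (exp_pos _).le, neg_mul, mul_comm t s]
  exact mul_le_mul_of_nonneg_right (hC s) (exp_pos _).le

lemma laplaceIntegrable_pow (n : ℕ) (ht : 0 < t) : LaplaceIntegrable (fun s => s ^ n) t := by
  have hn : (-1 : ℝ) < n := neg_one_lt_zero.trans_le n.cast_nonneg
  refine (integrableOn_rpow_mul_exp_neg_mul_rpow hn one_pos ht).congr_fun (fun s _ => ?_)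
    measurableSet_Ioi
  simp [mul_comm s t]

lemma laplace_pow (n : ℕ) (ht : 0 < t) : laplace (fun s => s ^ n) t = n ! / t ^ (n + 1) := by
  have h := integral_rpow_mul_exp_neg_mul_Ioi (a := n + 1) (by positivity) ht
  rw [add_sub_cancel_right, Gamma_nat_eq_factorial] at h
  simp only [rpow_natCast, ← Nat.cast_succ, mul_comm t] at h
  rw [laplace, h, one_div, inv_pow, inv_mul_eq_div]

lemma laplace_one (ht : 0 < t) : laplace (fun _ => 1) t = t⁻¹ := by
  simpa using laplace_pow 0 ht

lemma laplace_add (hf : LaplaceIntegrable f t) (hg : LaplaceIntegrable g t) :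
    laplace (fun s => f s + g s) t = laplace f t + laplace g t := by
  simp only [laplace, add_mul]
  exact integral_add hf hg

lemma laplace_sub (hf : LaplaceIntegrable f t) (hg : LaplaceIntegrable g t) :
    laplace (fun s => f s - g s) t = laplace f t - laplace g t := by
  simp only [laplace, sub_mul]
  exact integral_sub hf hg

lemma laplace_const_mul (c : ℝ) : laplace (fun s => c * f s) t = c * laplace f t := by
  simp only [laplace, mul_assoc]
  exact integral_const_mul c _

lemma laplace_mono (hf : LaplaceIntegrable f t) (hg : LaplaceIntegrable g t)
    (h : ∀ s, 0 < s → f s ≤ g s) : laplace f t ≤ laplace g t :=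
  setIntegral_mono_on hf hg measurableSet_Ioi fun s hs =>
    mul_le_mul_of_nonneg_right (h s hs) (exp_pos _).le

lemma laplace_pos (hf : LaplaceIntegrable f t) (h : ∀ s, 0 < s → 0 < f s) :
    0 < laplace f t := by
  have hpos : ∀ s ∈ Ioi (0 : ℝ), 0 < f s * exp (-(s * t)) := fun s hs => by
    have := h s hs; positivity
  rw [laplace, setIntegral_pos_iff_support_of_nonneg_ae
    ((ae_restrict_iff' measurableSet_Ioi).2 (ae_of_all _ fun s hs => (hpos s hs).le)) hf]
  refine lt_of_lt_of_le ?_ (measure_mono fun s hs => ⟨(hpos s hs).ne', hs⟩)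
  simp

lemma continuousOn_laplace {C : ℝ} (hf : Measurable f) (hC : ∀ s, |f s| ≤ C) :
    ContinuousOn (laplace f) (Ioi 0) := by
  intro t₀ (ht₀ : 0 < t₀)
  refine (continuousAt_of_dominated (bound := fun s => C * exp (-(t₀ / 2) * s))
    (Eventually.of_forall fun t => (hf.mul (by fun_prop)).aestronglyMeasurable) ?_
    ((exp_neg_integrableOn_Ioi 0 (half_pos ht₀)).const_mul C)
    (ae_of_all _ fun s => by fun_prop)).continuousWithinAt
  filter_upwards [Ioi_mem_nhds (half_lt_self ht₀)] with t (ht : t₀ / 2 < t)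
  filter_upwards [ae_restrict_mem measurableSet_Ioi] with s (hs : 0 < s)
  rw [Pi.mul_apply, norm_mul, norm_of_nonneg (exp_pos _).le]
  exact mul_le_mul (hC s) (exp_le_exp.2 (by nlinarith)) (exp_pos _).le
    ((abs_nonneg _).trans (hC s))

lemma integral_prod_Ioi_pos_of_pos_off_diag {F : ℝ × ℝ → ℝ}
    (hF : Integrable F ((volume.restrict (Ioi 0)).prod (volume.restrict (Ioi 0))))
    (hoff : ∀ s u, 0 < s → 0 < u → s ≠ u → 0 < F (s, u)) (hdiag : ∀ s, 0 < s → 0 ≤ F (s, s)) :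
    0 < ∫ p, F p ∂(volume.restrict (Ioi 0)).prod (volume.restrict (Ioi 0)) := by
  have hquad : ∀ᵐ p ∂(volume.restrict (Ioi (0 : ℝ))).prod (volume.restrict (Ioi (0 : ℝ))),
      p ∈ Ioi (0 : ℝ) ×ˢ Ioi 0 := by
    rw [Measure.prod_restrict]
    exact ae_restrict_mem (measurableSet_Ioi.prod measurableSet_Ioi)
  rw [integral_pos_iff_support_of_nonneg_ae _ hF]
  · refine lt_of_lt_of_le ?_ (measure_mono (s := Ioo 0 1 ×ˢ Ioi 1) ?_)
    · rw [Measure.prod_prod]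
      simp [Measure.restrict_apply measurableSet_Ioo, Measure.restrict_apply measurableSet_Ioi,
        inter_eq_left.2 (Ioo_subset_Ioi_self : Ioo (0 : ℝ) 1 ⊆ _)]
    · rintro ⟨s, u⟩ ⟨⟨hs, hs1⟩, hu : 1 < u⟩
      exact (hoff s u hs (by linarith) (by linarith)).ne'
  · filter_upwards [hquad] with ⟨s, u⟩ ⟨(hs : 0 < s), (hu : 0 < u)⟩
    rcases eq_or_ne s u with rfl | hsu
    · exact hdiag s hs
    · exact (hoff s u hs hu hsu).le

lemma mul_sub_mul_mul_exp_sub_exp_pos {t₁ t₂ s u : ℝ}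
    (hfg : StrictMonoOn (fun s => f s / g s) (Ioi 0)) (hg : ∀ s, 0 < s → 0 < g s)
    (ht : t₁ < t₂) (hs : 0 < s) (hu : 0 < u) (hsu : s ≠ u) :
    0 < (f u * g s - f s * g u) * (exp (-(s * t₂ + u * t₁)) - exp (-(s * t₁ + u * t₂))) := by
  have cross : ∀ a b, 0 < a → a < b → f a * g b < f b * g a := fun a b ha hab => by
    have := hfg ha (ha.trans hab : 0 < b) hab
    rwa [div_lt_div_iff₀ (hg a ha) (hg b (ha.trans hab))] at this
  rcases hsu.lt_or_gt with h | h
  · exact mul_pos (sub_pos.2 (cross s u hs h)) (sub_pos.2 (exp_lt_exp.2 (by nlinarith)))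
  · exact mul_pos_of_neg_of_neg (sub_neg.2 (cross u s hu h))
      (sub_neg.2 (exp_lt_exp.2 (by nlinarith)))

theorem strictAntiOn_laplace_div_laplace (hf : ∀ t, 0 < t → LaplaceIntegrable f t)
    (hg : ∀ t, 0 < t → LaplaceIntegrable g t) (hgpos : ∀ s, 0 < s → 0 < g s)
    (hfg : StrictMonoOn (fun s => f s / g s) (Ioi 0)) :
    StrictAntiOn (fun t => laplace f t / laplace g t) (Ioi 0) := by
  intro t₁ (ht₁ : 0 < t₁) t₂ (ht₂ : 0 < t₂) ht
  rw [div_lt_div_iff₀ (laplace_pos (hg t₂ ht₂) hgpos) (laplace_pos (hg t₁ ht₁) hgpos),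
    ← sub_pos]
  set μ := volume.restrict (Ioi (0 : ℝ))
  set F : ℝ × ℝ → ℝ := fun p => f p.1 * exp (-(p.1 * t₁)) * (g p.2 * exp (-(p.2 * t₂))) -
    f p.1 * exp (-(p.1 * t₂)) * (g p.2 * exp (-(p.2 * t₁)))
  have hF : Integrable F (μ.prod μ) :=
    ((hf t₁ ht₁).mul_prod (hg t₂ ht₂)).sub ((hf t₂ ht₂).mul_prod (hg t₁ ht₁))
  have hdiff : laplace f t₁ * laplace g t₂ - laplace f t₂ * laplace g t₁ =
      ∫ p, F p ∂μ.prod μ := by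
    simp only [laplace]
    rw [← integral_prod_mul, ← integral_prod_mul,
      ← integral_sub ((hf t₁ ht₁).mul_prod (hg t₂ ht₂)) ((hf t₂ ht₂).mul_prod (hg t₁ ht₁))]
  have hsymm : ∀ s u, F (s, u) + F (u, s) =
      (f u * g s - f s * g u) * (exp (-(s * t₂ + u * t₁)) - exp (-(s * t₁ + u * t₂))) := by
    intro s u
    simp only [F, neg_add, exp_add]
    ring
  have hpos : 0 < ∫ p, (F p + F p.swap) ∂μ.prod μ :=
    integral_prod_Ioi_pos_of_pos_off_diag (hF.add hF.swap)
      (fun s u hs hu hsu =>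
        (hsymm s u).symm ▸ mul_sub_mul_mul_exp_sub_exp_pos hfg hgpos ht hs hu hsu)
      (fun s _ => by simp [hsymm s s])
  rw [integral_add hF (hF.swap : Integrable (fun p => F p.swap) _), integral_prod_swap F] at hpos
  linarith

end Laplace

lemma laplaceIntegrable_inv_one_add_sq {t : ℝ} (ht : 0 < t) :
    LaplaceIntegrable (fun s => (1 + s ^ 2)⁻¹) t :=
  laplaceIntegrable_of_abs_le (C := 1) (by fun_prop)
    (fun s => by rw [abs_of_pos (by positivity)]; exact inv_le_one_of_one_le₀ (by nlinarith)) ht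

lemma laplace_inv_one_add_sq_le {t : ℝ} (ht : 0 < t) :
    laplace (fun s => (1 + s ^ 2)⁻¹) t ≤ π / 2 :=
  calc laplace (fun s => (1 + s ^ 2)⁻¹) t ≤ ∫ s in Ioi 0, (1 + s ^ 2)⁻¹ :=
        setIntegral_mono_on (laplaceIntegrable_inv_one_add_sq ht)
          integrable_inv_one_add_sq.integrableOn measurableSet_Ioi fun s (hs : 0 < s) =>
          mul_le_of_le_one_right (by positivity) (exp_le_one_iff.2 (by nlinarith))
    _ = π / 2 := by simp

theorem StrictAntiOn.bijOn_Ioo_of_tendsto {f : ℝ → ℝ} {a b c : ℝ} (hf : StrictAntiOn f (Ioi c))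
    (hc : ContinuousOn f (Ioi c)) (hb : Tendsto f (𝓝[>] c) (𝓝 b)) (ha : Tendsto f atTop (𝓝 a)) :
    BijOn f (Ioi c) (Ioo a b) := by
  refine ⟨fun t (ht : c < t) => ⟨?_, ?_⟩, hf.injOn, fun q ⟨hqa, hqb⟩ => ?_⟩
  · have : a ≤ f (t + 1) := le_of_tendsto ha <| (eventually_gt_atTop (t + 1)).mono fun u hu =>
      (hf (show c < t + 1 by linarith) (show c < u by linarith) hu).le
    exact this.trans_lt (hf ht (show c < t + 1 by linarith) (by linarith))
  · have hm : c < (c + t) / 2 := by linarith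
    have : f ((c + t) / 2) ≤ b := ge_of_tendsto hb <|
      Filter.mem_of_superset (Ioo_mem_nhdsGT hm) fun u hu => (hf hu.1 hm hu.2).le
    exact (hf hm ht (by linarith)).trans_le this
  · obtain ⟨t₁, hq₁, ht₁ : c < t₁⟩ :=
      ((hb.eventually (lt_mem_nhds hqb)).and self_mem_nhdsWithin).exists
    obtain ⟨t₂, hq₂, ht₂⟩ :=
      ((ha.eventually (gt_mem_nhds hqa)).and (eventually_gt_atTop c)).exists
    have hsub : uIcc t₁ t₂ ⊆ Ioi c := fun x hx => (lt_min ht₁ ht₂).trans_le hx.1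
    obtain ⟨t, ht, rfl⟩ :=
      intermediate_value_uIcc (hc.mono hsub) (mem_uIcc.2 (Or.inr ⟨hq₂.le, hq₁.le⟩))
    exact ⟨t, hsub ht, rfl⟩

noncomputable def sqDivSqAdd (c s : ℝ) : ℝ := s ^ 2 / (s ^ 2 + c)

section SqDivSqAdd

variable {c t : ℝ}

lemma sqDivSqAdd_pos (hc : 0 < c) {s : ℝ} (hs : 0 < s) : 0 < sqDivSqAdd c s := by
  unfold sqDivSqAdd; positivity

lemma measurable_sqDivSqAdd (c : ℝ) : Measurable (sqDivSqAdd c) := by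
  unfold sqDivSqAdd; fun_prop

lemma abs_sqDivSqAdd_le_one (hc : 0 < c) (s : ℝ) : |sqDivSqAdd c s| ≤ 1 := by
  rw [sqDivSqAdd, abs_of_nonneg (by positivity)]
  exact div_le_one_of_le₀ (by linarith) (by positivity)

lemma laplaceIntegrable_sqDivSqAdd (hc : 0 < c) (ht : 0 < t) :
    LaplaceIntegrable (sqDivSqAdd c) t :=
  laplaceIntegrable_of_abs_le (measurable_sqDivSqAdd c) (abs_sqDivSqAdd_le_one hc) ht

lemma continuousOn_laplace_sqDivSqAdd (hc : 0 < c) :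
    ContinuousOn (laplace (sqDivSqAdd c)) (Ioi 0) :=
  continuousOn_laplace (measurable_sqDivSqAdd c) (abs_sqDivSqAdd_le_one hc)

lemma laplace_sqDivSqAdd_pos (hc : 0 < c) (ht : 0 < t) : 0 < laplace (sqDivSqAdd c) t :=
  laplace_pos (laplaceIntegrable_sqDivSqAdd hc ht) fun _ => sqDivSqAdd_pos hc

lemma laplace_sqDivSqAdd_one_add_laplace_inv_one_add_sq (ht : 0 < t) :
    laplace (sqDivSqAdd 1) t + laplace (fun s => (1 + s ^ 2)⁻¹) t = t⁻¹ := by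
  rw [← laplace_add (laplaceIntegrable_sqDivSqAdd one_pos ht)
    (laplaceIntegrable_inv_one_add_sq ht), ← laplace_one ht]
  congr 1 with s
  simp only [sqDivSqAdd]
  field_simp
  ring

lemma laplace_sqDivSqAdd_one_sub_four_le (ht : 0 < t) :
    laplace (sqDivSqAdd 1) t - laplace (sqDivSqAdd 4) t ≤
      3 * laplace (fun s => (1 + s ^ 2)⁻¹) t := by
  have i₁ := laplaceIntegrable_sqDivSqAdd one_pos ht
  have i₄ := laplaceIntegrable_sqDivSqAdd (by norm_num : (0 : ℝ) < 4) ht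
  rw [← laplace_sub i₁ i₄, ← laplace_const_mul]
  refine laplace_mono (i₁.sub i₄) ((laplaceIntegrable_inv_one_add_sq ht).const_mul 3)
    fun s _ => ?_
  simp only [sqDivSqAdd]
  rw [div_sub_div _ _ (by positivity) (by positivity), div_le_iff₀ (by positivity)]
  field_simp
  nlinarith

lemma laplace_sqDivSqAdd_four_le_one (ht : 0 < t) :
    laplace (sqDivSqAdd 4) t ≤ laplace (sqDivSqAdd 1) t :=
  laplace_mono (laplaceIntegrable_sqDivSqAdd (by norm_num) ht)
    (laplaceIntegrable_sqDivSqAdd one_pos ht) fun s _ =>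
    div_le_div_of_nonneg_left (sq_nonneg s) (by positivity) (by linarith)

lemma laplace_sqDivSqAdd_one_div_four_le (ht : 0 < t) :
    laplace (sqDivSqAdd 1) t / 4 ≤ laplace (sqDivSqAdd 4) t := by
  rw [div_eq_inv_mul, ← laplace_const_mul]
  refine laplace_mono ((laplaceIntegrable_sqDivSqAdd one_pos ht).const_mul _)
    (laplaceIntegrable_sqDivSqAdd (by norm_num) ht) fun s _ => ?_
  simp only [sqDivSqAdd]
  rw [inv_mul_eq_div, div_div, div_le_div_iff₀ (by positivity) (by positivity)]
  nlinarith [sq_nonneg s]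

lemma laplace_sqDivSqAdd_four_le (ht : 0 < t) :
    laplace (sqDivSqAdd 4) t ≤ laplace (sqDivSqAdd 1) t / 4 + 9 / (2 * t ^ 5) := by
  have i₁ := (laplaceIntegrable_sqDivSqAdd one_pos ht).const_mul 4⁻¹
  have i₄ := (laplaceIntegrable_pow 4 ht).const_mul (3 / 16)
  calc laplace (sqDivSqAdd 4) t
      ≤ laplace (fun s => 4⁻¹ * sqDivSqAdd 1 s + 3 / 16 * s ^ 4) t := by
        refine laplace_mono (laplaceIntegrable_sqDivSqAdd (by norm_num) ht) (i₁.add i₄)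
          fun s _ => ?_
        simp only [sqDivSqAdd]
        rw [inv_mul_eq_div, div_div, div_add' _ _ _ (by positivity),
          div_le_div_iff₀ (by positivity) (by positivity)]
        nlinarith [sq_nonneg s, pow_nonneg (sq_nonneg s) 3]
    _ = laplace (sqDivSqAdd 1) t / 4 + 9 / (2 * t ^ 5) := by
        rw [laplace_add i₁ i₄, laplace_const_mul, laplace_const_mul, laplace_pow 4 ht]
        norm_num [Nat.factorial]
        ring

lemma le_laplace_sqDivSqAdd_one (ht : 0 < t) :
    2 / t ^ 3 - 24 / t ^ 5 ≤ laplace (sqDivSqAdd 1) t := by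
  have i₁ := laplaceIntegrable_sqDivSqAdd one_pos ht
  have i₄ := laplaceIntegrable_pow 4 ht
  have h : laplace (fun s => s ^ 2) t ≤ laplace (fun s => sqDivSqAdd 1 s + s ^ 4) t :=
    laplace_mono (laplaceIntegrable_pow 2 ht) (i₁.add i₄) fun s _ => by
      simp only [sqDivSqAdd]
      rw [div_add' _ _ _ (by positivity), le_div_iff₀ (by positivity)]
      nlinarith [sq_nonneg s, pow_nonneg (sq_nonneg s) 3]
  rw [laplace_add i₁ i₄, laplace_pow 2 ht, laplace_pow 4 ht] at h
  norm_num [Nat.factorial] at h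
  linarith

end SqDivSqAdd

lemma I'_eq_neg_laplace (t : ℝ) : I' t = -laplace (sqDivSqAdd 1) t := by
  simp only [I', laplace, sqDivSqAdd, mul_div_right_comm]

lemma I'_two_mul (t : ℝ) : I' (2 * t) = -(laplace (sqDivSqAdd 4) t / 2) := by
  have h := integral_comp_mul_left_Ioi (fun s => sqDivSqAdd 4 s * exp (-(s * t))) 0 two_pos
  rw [mul_zero, smul_eq_mul] at h
  rw [I', laplace, ← inv_mul_eq_div, ← h]
  congr 2 with s
  simp only [sqDivSqAdd]
  field_simp
  ring_nf

noncomputable def kernelRatio (t : ℝ) : ℝ :=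
  laplace (sqDivSqAdd 4) t / laplace (sqDivSqAdd 1) t

lemma I'_two_mul_div_I' (t : ℝ) : I' (2 * t) / I' t = kernelRatio t / 2 := by
  rw [I'_two_mul, I'_eq_neg_laplace, neg_div_neg_eq, div_right_comm, kernelRatio]

lemma strictAntiOn_kernelRatio : StrictAntiOn kernelRatio (Ioi 0) := by
  refine strictAntiOn_laplace_div_laplace (fun t => laplaceIntegrable_sqDivSqAdd (by norm_num))
    (fun t => laplaceIntegrable_sqDivSqAdd one_pos) (fun s => sqDivSqAdd_pos one_pos) ?_
  have h : ∀ s : ℝ, 0 < s → sqDivSqAdd 4 s / sqDivSqAdd 1 s = 1 - 3 / (s ^ 2 + 4) :=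
    fun s hs => by
      simp only [sqDivSqAdd]
      field_simp
      ring
  intro s (hs : 0 < s) u (hu : 0 < u) hsu
  simp only [h s hs, h u hu]
  gcongr

lemma continuousOn_kernelRatio : ContinuousOn kernelRatio (Ioi 0) :=
  (continuousOn_laplace_sqDivSqAdd (by norm_num)).div (continuousOn_laplace_sqDivSqAdd one_pos)
    fun _ ht => (laplace_sqDivSqAdd_pos one_pos ht).ne'

section KernelRatio

variable {t : ℝ}

lemma kernelRatio_le_one (ht : 0 < t) : kernelRatio t ≤ 1 :=
  (div_le_one (laplace_sqDivSqAdd_pos one_pos ht)).2 (laplace_sqDivSqAdd_four_le_one ht)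

lemma one_quarter_le_kernelRatio (ht : 0 < t) : 1 / 4 ≤ kernelRatio t := by
  rw [kernelRatio, le_div_iff₀ (laplace_sqDivSqAdd_pos one_pos ht)]
  linarith [laplace_sqDivSqAdd_one_div_four_le ht]

lemma one_sub_le_kernelRatio (ht : 0 < t) (htπ : π * t < 1) :
    1 - 3 * π * t ≤ kernelRatio t := by
  have htL : t * laplace (sqDivSqAdd 1) t + t * laplace (fun s => (1 + s ^ 2)⁻¹) t = 1 := by
    rw [← mul_add, laplace_sqDivSqAdd_one_add_laplace_inv_one_add_sq ht, mul_inv_cancel₀ ht.ne']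
  have key : laplace (fun s => (1 + s ^ 2)⁻¹) t ≤ π * (t * laplace (sqDivSqAdd 1) t) := by
    rw [show t * laplace (sqDivSqAdd 1) t = 1 - t * laplace (fun s => (1 + s ^ 2)⁻¹) t by
      linarith]
    nlinarith [mul_le_mul_of_nonneg_right (laplace_inv_one_add_sq_le ht)
      (by positivity : (0 : ℝ) ≤ 1 + π * t), mul_lt_mul_of_pos_left htπ pi_pos]
  rw [kernelRatio, le_div_iff₀ (laplace_sqDivSqAdd_pos one_pos ht)]
  linarith [laplace_sqDivSqAdd_one_sub_four_le ht]

lemma kernelRatio_le (ht : 5 ≤ t) : kernelRatio t ≤ 1 / 4 + 9 / (2 * t ^ 2) := by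
  have ht₀ : 0 < t := by linarith
  have hL : 1 / t ^ 3 ≤ laplace (sqDivSqAdd 1) t := by
    refine le_trans ?_ (le_laplace_sqDivSqAdd_one ht₀)
    rw [div_sub_div _ _ (by positivity) (by positivity),
      div_le_div_iff₀ (by positivity) (by positivity)]
    nlinarith [mul_nonneg (pow_nonneg ht₀.le 6) (by nlinarith : (0 : ℝ) ≤ t ^ 2 - 24)]
  have h : 9 / (2 * t ^ 5) ≤ 9 / (2 * t ^ 2) * laplace (sqDivSqAdd 1) t :=
    calc 9 / (2 * t ^ 5) = 9 / (2 * t ^ 2) * (1 / t ^ 3) := by field_simp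
      _ ≤ _ := mul_le_mul_of_nonneg_left hL (by positivity)
  rw [kernelRatio, div_le_iff₀ (laplace_sqDivSqAdd_pos one_pos ht₀), add_mul]
  linarith [laplace_sqDivSqAdd_four_le ht₀]

end KernelRatio

lemma tendsto_kernelRatio_nhdsGT_zero : Tendsto kernelRatio (𝓝[>] 0) (𝓝 1) := by
  have hlow : Tendsto (fun t => 1 - 3 * π * t) (𝓝[>] 0) (𝓝 1) :=
    tendsto_nhdsWithin_of_tendsto_nhds
      ((by fun_prop : Continuous fun t : ℝ => 1 - 3 * π * t).tendsto' 0 1 (by simp))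
  refine tendsto_of_tendsto_of_tendsto_of_le_of_le' hlow tendsto_const_nhds ?_ ?_
  · filter_upwards [Ioo_mem_nhdsGT (inv_pos.2 pi_pos)] with t ⟨ht, htπ⟩
    exact one_sub_le_kernelRatio ht
      (by simpa [pi_ne_zero] using mul_lt_mul_of_pos_left htπ pi_pos)
  · filter_upwards [self_mem_nhdsWithin] with t ht
    exact kernelRatio_le_one ht

lemma tendsto_kernelRatio_atTop : Tendsto kernelRatio atTop (𝓝 (1 / 4)) := by
  have hup : Tendsto (fun t : ℝ => 1 / 4 + 9 / (2 * t ^ 2)) atTop (𝓝 (1 / 4)) := by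
    simpa using tendsto_const_nhds.add (tendsto_const_nhds.div_atTop
      ((tendsto_pow_atTop two_ne_zero).const_mul_atTop (two_pos : (0 : ℝ) < 2)))
  refine tendsto_of_tendsto_of_tendsto_of_le_of_le' tendsto_const_nhds hup ?_ ?_
  · filter_upwards [eventually_gt_atTop 0] with t ht
    exact one_quarter_le_kernelRatio ht
  · filter_upwards [eventually_ge_atTop 5] with t ht
    exact kernelRatio_le ht

theorem I'_ratio_bijective :
    (∀ q ∈ Set.Ioo (1/8 : ℝ) (1/2), ∃! t₀ : ℝ, 0 < t₀ ∧ I' (2 * t₀) = q * I' t₀) ∧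
    Set.BijOn (fun t => I' (2 * t) / I' t) (Set.Ioi (0:ℝ)) (Set.Ioo (1/8 : ℝ) (1/2)) := by
  have hbij : BijOn (fun t => I' (2 * t) / I' t) (Ioi 0) (Ioo (1 / 8) (1 / 2)) := by
    simp only [I'_two_mul_div_I']
    refine StrictAntiOn.bijOn_Ioo_of_tendsto (fun s hs u hu hsu => ?_)
      (continuousOn_kernelRatio.div_const 2) ?_ ?_
    · exact div_lt_div_of_pos_right (strictAntiOn_kernelRatio hs hu hsu) two_pos
    · simpa using tendsto_kernelRatio_nhdsGT_zero.div_const 2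
    · convert tendsto_kernelRatio_atTop.div_const 2 using 2; norm_num
  have hiff : ∀ q t, 0 < t → (I' (2 * t) = q * I' t ↔ I' (2 * t) / I' t = q) := fun q t ht =>
    (div_eq_iff (by simpa [I'_eq_neg_laplace] using (laplace_sqDivSqAdd_pos one_pos ht).ne')).symm
  refine ⟨fun q hq => ?_, hbij⟩
  obtain ⟨t, ht, htq⟩ := hbij.surjOn hq
  exact ⟨t, ⟨ht, (hiff q t ht).2 htq⟩, fun u ⟨hu, huq⟩ =>
    hbij.injOn hu ht (((hiff q u hu).1 huq).trans htq.symm)⟩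
end
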